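/- Bound geodesics are radially confined: let a > b > 0 and let r, θ : ℝ → ℝ be twice continuously differentiable functions satisfying the torus geodesic equations with r(0) = 0, angular momentum ℓ, and speed v > 0, and suppose ℓ² > (a − b)²·v². Then a − b < |ℓ|/v ≤ a + b, and for every λ ∈ ℝ one has cos(r(λ)/b) ≥ (|ℓ|/v − a)/b > −1 and |r(λ)| ≤ b·arccos((|ℓ|/v − a)/b) < π·b; in particular the geodesic never reaches the inner equator. -/

import Mathlib

/-!
Along a geodesic of the surface of revolution `dρ² + R(ρ)² dθ²` both the angular momentum
`ℓ = R(r)² θ'` (Clairaut) and the energy `r'² + R(r)² θ'²` are conserved. Hence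
`ℓ² = R(r)² · (R(r) θ')² ≤ R(r)² v²`, i.e. `|ℓ| / v ≤ R(r(λ)) = a + b cos(r(λ)/b)`
for all `λ`.
This bounds `cos(r/b)` from below by a constant `c > -1`; since `r` is continuous and starts
at `0`, it cannot cross the level `b · arccos c`, by the intermediate value theorem.
-/

open Real Set

lemma abs_le_arccos_of_le_cos {f : ℝ → ℝ} {x₀ c : ℝ} (hf : Continuous f) (h₀ : f x₀ = 0)
    (hc : -1 < c) (hcos : ∀ x, c ≤ cos (f x)) (x : ℝ) : |f x| ≤ arccos c := by
  have hc₁ : c ≤ 1 := (hcos x₀).trans (cos_le_one _)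
  by_contra! hlt
  set y := min |f x| π
  have hy : arccos c < y := lt_min hlt (arccos_lt_pi.2 hc)
  obtain ⟨s, -, hs⟩ : ∃ s ∈ uIcc x₀ x, |f s| = y := by
    refine intermediate_value_uIcc (f := fun x => |f x|) hf.abs.continuousOn ?_
    rw [h₀, abs_zero, uIcc_of_le (abs_nonneg _)]
    exact ⟨(arccos_nonneg c).trans hy.le, min_le_left _ _⟩
  have hcos_y : cos y < c := by
    rw [← cos_arccos hc.le hc₁]
    exact cos_lt_cos_of_nonneg_of_le_pi (arccos_nonneg c) (min_le_right _ _) hy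
  have hcos_s := hcos s
  rw [← cos_abs, hs] at hcos_s
  linarith

lemma abs_sq_mul_le_mul_sqrt {x R w : ℝ} (hR : 0 ≤ R) :
    |R ^ 2 * w| ≤ R * √(x ^ 2 + R ^ 2 * w ^ 2) := by
  calc |R ^ 2 * w| = R * √((R * w) ^ 2) := by
        rw [sqrt_sq_eq_abs, abs_mul, abs_pow, abs_of_nonneg hR, abs_mul, abs_of_nonneg hR]; ring
    _ ≤ R * √(x ^ 2 + R ^ 2 * w ^ 2) := by
        gcongr
        nlinarith [sq_nonneg x]

section SurfaceOfRevolution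

variable {R R' r θ : ℝ → ℝ} {t : ℝ}

theorem hasDerivAt_angularMomentum (hR : HasDerivAt R (R' (r t)) (r t))
    (hr : DifferentiableAt ℝ r t) (hθ' : DifferentiableAt ℝ (deriv θ) t)
    (hθ'' : deriv (deriv θ) t = -(2 * R' (r t) / R (r t)) * deriv r t * deriv θ t) :
    HasDerivAt (fun s => R (r s) ^ 2 * deriv θ s) 0 t := by
  refine (((hR.comp t hr.hasDerivAt).pow 2).mul hθ'.hasDerivAt).congr_deriv ?_
  rw [hθ'']
  simp only [Function.comp_apply, Pi.pow_apply]
  field_simp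
  ring

theorem hasDerivAt_energy (hR : HasDerivAt R (R' (r t)) (r t))
    (hr : DifferentiableAt ℝ r t) (hr' : DifferentiableAt ℝ (deriv r) t)
    (hθ' : DifferentiableAt ℝ (deriv θ) t)
    (hr'' : deriv (deriv r) t = R' (r t) * R (r t) * deriv θ t ^ 2)
    (hθ'' : deriv (deriv θ) t = -(2 * R' (r t) / R (r t)) * deriv r t * deriv θ t) :
    HasDerivAt (fun s => deriv r s ^ 2 + R (r s) ^ 2 * deriv θ s ^ 2) 0 t := by
  refine ((hr'.hasDerivAt.pow 2).add
    (((hR.comp t hr.hasDerivAt).pow 2).mul (hθ'.hasDerivAt.pow 2))).congr_deriv ?_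
  rw [hr'', hθ'']
  simp only [Function.comp_apply, Pi.pow_apply]
  field_simp
  ring

theorem abs_angularMomentum_le_mul_speed (hR : ∀ ρ, HasDerivAt R (R' ρ) ρ)
    (hRnonneg : ∀ t, 0 ≤ R (r t)) (hr : Differentiable ℝ r) (hr' : Differentiable ℝ (deriv r))
    (hθ' : Differentiable ℝ (deriv θ))
    (hr'' : ∀ t, deriv (deriv r) t = R' (r t) * R (r t) * deriv θ t ^ 2)
    (hθ'' : ∀ t, deriv (deriv θ) t = -(2 * R' (r t) / R (r t)) * deriv r t * deriv θ t)
    (t : ℝ) :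
    |R (r 0) ^ 2 * deriv θ 0| ≤
      R (r t) * √(deriv r 0 ^ 2 + R (r 0) ^ 2 * deriv θ 0 ^ 2) := by
  have hL := fun s => hasDerivAt_angularMomentum (hR (r s)) (hr s) (hθ' s) (hθ'' s)
  have hE := fun s => hasDerivAt_energy (hR (r s)) (hr s) (hr' s) (hθ' s) (hr'' s) (hθ'' s)
  rw [← is_const_of_deriv_eq_zero (fun s => (hL s).differentiableAt) (fun s => (hL s).deriv) t,
    ← is_const_of_deriv_eq_zero (fun s => (hE s).differentiableAt) (fun s => (hE s).deriv) t]
  exact abs_sq_mul_le_mul_sqrt (hRnonneg t)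

end SurfaceOfRevolution

section Torus

variable {a b : ℝ}

noncomputable def torusRadius (a b ρ : ℝ) : ℝ := a + b * cos (ρ / b)

lemma hasDerivAt_torusRadius (hb : b ≠ 0) (ρ : ℝ) :
    HasDerivAt (torusRadius a b) (-sin (ρ / b)) ρ := by
  refine ((((hasDerivAt_id' ρ).div_const b).cos.const_mul b).const_add a).congr_deriv ?_
  field_simp

lemma torusRadius_nonneg (h : |b| ≤ a) (ρ : ℝ) : 0 ≤ torusRadius a b ρ := by
  have : |b * cos (ρ / b)| ≤ |b| := by
    rw [abs_mul]
    exact mul_le_of_le_one_right (abs_nonneg b) (abs_cos_le_one _)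
  unfold torusRadius
  linarith [neg_abs_le (b * cos (ρ / b))]

lemma torusRadius_le (hb : 0 ≤ b) (ρ : ℝ) : torusRadius a b ρ ≤ a + b := by
  unfold torusRadius
  nlinarith [cos_le_one (ρ / b)]

end Torus

/-- Bound torus geodesics are radially confined: if ℓ² > (a-b)²v², then
a-b < |ℓ|/v ≤ a+b, cos(r/b) ≥ (|ℓ|/v - a)/b > -1, and
|r| ≤ b·arccos((|ℓ|/v - a)/b) < πb; the geodesic never reaches the inner equator. -/
theorem torus_geodesic_bound_confined
    (a b : ℝ) (hb : 0 < b) (hab : b < a)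
    (r θ : ℝ → ℝ) (hr : ContDiff ℝ 2 r) (hθ : ContDiff ℝ 2 θ)
    (hgeo : ∀ t : ℝ,
      deriv (deriv r) t =
        -Real.sin (r t / b) * (a + b * Real.cos (r t / b)) * (deriv θ t) ^ 2 ∧
      deriv (deriv θ) t =
        (2 * Real.sin (r t / b) / (a + b * Real.cos (r t / b))) * deriv r t * deriv θ t)
    (hr0 : r 0 = 0)
    (ℓ v : ℝ)
    (hℓ : ℓ = (a + b * Real.cos (r 0 / b)) ^ 2 * deriv θ 0)
    (hv : v = Real.sqrt ((deriv r 0) ^ 2 +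
      (a + b * Real.cos (r 0 / b)) ^ 2 * (deriv θ 0) ^ 2))
    (hvpos : 0 < v)
    (hbound : (a - b) ^ 2 * v ^ 2 < ℓ ^ 2) :
    a - b < |ℓ| / v ∧ |ℓ| / v ≤ a + b ∧
    (-1 : ℝ) < (|ℓ| / v - a) / b ∧
    (∀ t : ℝ,
      (|ℓ| / v - a) / b ≤ Real.cos (r t / b) ∧
      |r t| ≤ b * Real.arccos ((|ℓ| / v - a) / b)) ∧
    b * Real.arccos ((|ℓ| / v - a) / b) < Real.pi * b := by
  have hclairaut : ∀ t, |ℓ| / v ≤ torusRadius a b (r t) := fun t => by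
    rw [div_le_iff₀ hvpos, hℓ, hv]
    exact abs_angularMomentum_le_mul_speed (hasDerivAt_torusRadius hb.ne')
      (fun s => torusRadius_nonneg (by rw [abs_of_pos hb]; exact hab.le) (r s))
      (hr.differentiable two_ne_zero) hr.differentiable_deriv_two hθ.differentiable_deriv_two
      (fun s => (hgeo s).1)
      (fun s => by rw [(hgeo s).2]; unfold torusRadius; ring) t
  have hout : a - b < |ℓ| / v := by
    rw [lt_div_iff₀ hvpos, ← abs_of_pos (mul_pos (sub_pos.2 hab) hvpos), ← sq_lt_sq, mul_pow]
    exact hbound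
  set c := (|ℓ| / v - a) / b
  have hc : -1 < c := by rw [lt_div_iff₀ hb]; linarith
  have hcos : ∀ t, c ≤ cos (r t / b) := fun t => by
    have := hclairaut t
    unfold torusRadius at this
    rw [div_le_iff₀ hb]
    linarith
  have hconf : ∀ t, |r t / b| ≤ arccos c :=
    abs_le_arccos_of_le_cos (hr.continuous.div_const b) (by rw [hr0, zero_div]) hc hcos
  refine ⟨hout, (hclairaut 0).trans (torusRadius_le hb.le _), hc, fun t => ⟨hcos t, ?_⟩, ?_⟩
  · have := hconf t
    rwa [abs_div, abs_of_pos hb, div_le_iff₀ hb, mul_comm] at this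
  · rw [mul_comm]
    exact mul_lt_mul_of_pos_right (arccos_lt_pi.2 hc) hb
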